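/- Let M be the 3 × 3 matrix with columns (1,-1,0), (-5,1,3), (0,-1,1). Then ℕ³ has exactly five M-subgraphs: the four slices {(a,b,c) ∈ ℕ³ : a+b+c = n} for n = 0,1,2,3, and the single unbounded set {(a,b,c) ∈ ℕ³ : a+b+c ≥ 4}. Consequently the space of polynomial solutions of I(M) is 4-dimensional, spanned by 1, x+y+z, (x+y+z)², (x+y+z)³. -/

import Mathlib

open MvPolynomial

/-- The positive part `w₊ ∈ ℕ^q` of an integer vector `w`. -/
noncomputable def posPart {q : ℕ} (w : Fin q → ℤ) : Fin q →₀ ℕ :=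
  Finsupp.equivFunOnFinite.symm fun i => (w i).toNat

/-- The coefficient at `u` of `∂^m f` for a polynomial `f`. -/
noncomputable def derivCoeff {q : ℕ} (m : Fin q →₀ ℕ)
    (f : MvPolynomial (Fin q) ℂ) (u : Fin q →₀ ℕ) : ℂ :=
  (∏ i, ((u i + m i).factorial : ℂ) / (u i).factorial) * f.coeff (u + m)

/-- `f` is a polynomial solution of the PDE system `I(M)`. -/
def IsSolution {q m : ℕ} (M : Matrix (Fin q) (Fin m) ℤ)
    (f : MvPolynomial (Fin q) ℂ) : Prop :=
  ∀ (j : Fin m) (u : Fin q →₀ ℕ),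
    derivCoeff (posPart fun i => M i j) f u =
    derivCoeff (posPart fun i => -(M i j)) f u

/-- Adjacency in the graph `Γ(M)` on `ℕ^q`. -/
def Medge {q m : ℕ} (M : Matrix (Fin q) (Fin m) ℤ) (u v : Fin q →₀ ℕ) : Prop :=
  ∃ j : Fin m, (∀ i, (u i : ℤ) - (v i : ℤ) = M i j) ∨
    (∀ i, (v i : ℤ) - (u i : ℤ) = M i j)

/-- The `M`-subgraph containing `u`. -/
def Mcomp {q m : ℕ} (M : Matrix (Fin q) (Fin m) ℤ) (u : Fin q →₀ ℕ) :
    Set (Fin q →₀ ℕ) :=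
  {v | Relation.ReflTransGen (Medge M) u v}

/-!
Writing `u! · coeff_u f` for the value of `∂^u f` at the origin, each generator
`∂^{m₊} - ∂^{m₋}` of `I(M)` says that these numbers agree at the two ends of every edge of
`Γ(M)`; so polynomial solutions are the finitely supported functions on `ℕ³` that are constant on
`M`-subgraphs. For this `M` the columns `(1,-1,0)` and `(0,-1,1)` connect every slice
`a+b+c = n`, while `(-5,1,3)`, the only column changing `a+b+c`, needs `b ≥ 1, c ≥ 3` and so only
links slice `n+4` with slice `n+5`. Finite support kills the unbounded component, and on slice
`n ≤ 3` the function `u ↦ u! · coeff_u ((x+y+z)^n)` is the constant `n!`.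
-/

section FactorialCoeff

variable {σ : Type*} [Fintype σ]

/-- The value of `∂^u f` at the origin. -/
noncomputable def factorialCoeff (f : MvPolynomial σ ℂ) (u : σ →₀ ℕ) : ℂ :=
  (∏ i, ((u i).factorial : ℂ)) * coeff u f

lemma prod_factorial_ne_zero (u : σ →₀ ℕ) : (∏ i, ((u i).factorial : ℂ)) ≠ 0 :=
  Finset.prod_ne_zero_iff.2 fun _ _ => Nat.cast_ne_zero.2 (Nat.factorial_ne_zero _)

lemma factorialCoeff_injective : Function.Injective (factorialCoeff (σ := σ)) := by
  intro f g h
  ext u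
  exact mul_left_cancel₀ (prod_factorial_ne_zero u) (congrFun h u)

lemma factorialCoeff_eq_zero_of_totalDegree_lt {f : MvPolynomial σ ℂ} {u : σ →₀ ℕ}
    (h : f.totalDegree < u.degree) : factorialCoeff f u = 0 := by
  rw [factorialCoeff, coeff_eq_zero_of_totalDegree_lt h, mul_zero]

lemma factorialCoeff_sum_smul {ι : Type*} (s : Finset ι) (c : ι → ℂ)
    (p : ι → MvPolynomial σ ℂ) (u : σ →₀ ℕ) :
    factorialCoeff (∑ i ∈ s, c i • p i) u = ∑ i ∈ s, c i * factorialCoeff (p i) u := by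
  simp only [factorialCoeff, coeff_sum, coeff_smul, smul_eq_mul, Finset.mul_sum]
  exact Finset.sum_congr rfl fun i _ => mul_left_comm _ _ _

lemma factorialCoeff_sum_X_pow (n : ℕ) (u : σ →₀ ℕ) :
    factorialCoeff ((∑ i, X i) ^ n) u = if u.degree = n then (n.factorial : ℂ) else 0 := by
  classical
  rw [factorialCoeff, coeff_sum_X_pow_of_fintype, show (u.sum fun _ m => m) = u.degree from rfl]
  split_ifs with h
  · rw [← h, Finsupp.multinomial_eq_of_support_subset (Finset.subset_univ _), Finsupp.degree_eq_sum]
    exact_mod_cast Nat.multinomial_spec Finset.univ u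
  · rw [Nat.cast_zero, mul_zero]

lemma factorialCoeff_sum_smul_sum_X_pow {k : ℕ} (c : Fin k → ℂ) (u : σ →₀ ℕ) :
    factorialCoeff (∑ i : Fin k, c i • (∑ j, X j) ^ (i : ℕ)) u =
      if h : u.degree < k then c ⟨u.degree, h⟩ * (u.degree.factorial : ℂ) else 0 := by
  simp only [factorialCoeff_sum_smul, factorialCoeff_sum_X_pow, mul_ite, mul_zero]
  split_ifs with h
  · rw [Finset.sum_eq_single ⟨u.degree, h⟩ (fun i _ hi => if_neg fun hu => hi (Fin.ext hu.symm))
      (by simp), if_pos rfl]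
  · exact Finset.sum_eq_zero fun i _ => if_neg (by omega)

lemma linearIndependent_sum_X_pow [Nonempty σ] (k : ℕ) :
    LinearIndependent ℂ fun i : Fin k => (∑ j, X j : MvPolynomial σ ℂ) ^ (i : ℕ) := by
  classical
  rw [Fintype.linearIndependent_iff]
  intro c hc i
  have h := congrArg (factorialCoeff · (Finsupp.single (Classical.arbitrary σ) (i : ℕ))) hc
  simp only [factorialCoeff_sum_smul_sum_X_pow, Finsupp.degree_single, dif_pos i.isLt] at h
  simpa [factorialCoeff, Nat.factorial_ne_zero] using h

end FactorialCoeff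

section Solutions

variable {q m : ℕ}

lemma prod_factorial_mul_derivCoeff (n : Fin q →₀ ℕ) (f : MvPolynomial (Fin q) ℂ)
    (u : Fin q →₀ ℕ) :
    (∏ i, ((u i).factorial : ℂ)) * derivCoeff n f u = factorialCoeff f (u + n) := by
  rw [derivCoeff, factorialCoeff, ← mul_assoc, ← Finset.prod_mul_distrib]
  congr 1
  exact Finset.prod_congr rfl fun i _ =>
    mul_div_cancel₀ _ (Nat.cast_ne_zero.2 (Nat.factorial_ne_zero _))

lemma derivCoeff_eq_derivCoeff_iff (n n' : Fin q →₀ ℕ) (f : MvPolynomial (Fin q) ℂ)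
    (u : Fin q →₀ ℕ) :
    derivCoeff n f u = derivCoeff n' f u ↔
      factorialCoeff f (u + n) = factorialCoeff f (u + n') := by
  rw [← prod_factorial_mul_derivCoeff, ← prod_factorial_mul_derivCoeff,
    mul_right_inj' (prod_factorial_ne_zero u)]

lemma posPart_apply (w : Fin q → ℤ) (i : Fin q) : _root_.posPart w i = (w i).toNat := rfl

lemma medge_add_posPart (M : Matrix (Fin q) (Fin m) ℤ) (j : Fin m) (u : Fin q →₀ ℕ) :
    Medge M (u + _root_.posPart fun i => M i j) (u + _root_.posPart fun i => -M i j) :=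
  ⟨j, Or.inl fun i => by simp only [Finsupp.add_apply, posPart_apply]; push_cast; omega⟩

lemma inf_add_posPart_of_sub_eq {u v : Fin q →₀ ℕ} {w : Fin q → ℤ}
    (h : ∀ i, (u i : ℤ) - v i = w i) :
    u ⊓ v + _root_.posPart w = u ∧ u ⊓ v + _root_.posPart (fun i => -w i) = v := by
  constructor <;> ext i <;> have := h i <;>
    simp only [Finsupp.add_apply, Finsupp.inf_apply, posPart_apply] <;> omega

instance (M : Matrix (Fin q) (Fin m) ℤ) : Std.Symm (Medge M) :=
  ⟨fun _ _ ⟨j, h⟩ => ⟨j, h.symm⟩⟩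

/-- Since `M j = (M j)₊ - (M j)₋`, the equation `∂^{(M j)₊} f = ∂^{(M j)₋} f` says
`factorialCoeff f (u + (M j)₊) = factorialCoeff f (u + (M j)₋)` for all `u`, and these pairs are
exactly the edges of `Γ(M)`. -/
theorem isSolution_iff_forall_medge (M : Matrix (Fin q) (Fin m) ℤ) (f : MvPolynomial (Fin q) ℂ) :
    IsSolution M f ↔ ∀ u v, Medge M u v → factorialCoeff f u = factorialCoeff f v := by
  constructor
  · rintro hf u v ⟨j, huv | hvu⟩
    · obtain ⟨hu, hv⟩ := inf_add_posPart_of_sub_eq huv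
      have := (derivCoeff_eq_derivCoeff_iff _ _ f (u ⊓ v)).1 (hf j _)
      rwa [hu, hv] at this
    · obtain ⟨hv, hu⟩ := inf_add_posPart_of_sub_eq hvu
      have := (derivCoeff_eq_derivCoeff_iff _ _ f (v ⊓ u)).1 (hf j _)
      rwa [hu, hv, eq_comm] at this
  · intro hf j u
    exact (derivCoeff_eq_derivCoeff_iff _ _ f u).2 (hf _ _ (medge_add_posPart M j u))

lemma IsSolution.factorialCoeff_eq_of_reflTransGen {M : Matrix (Fin q) (Fin m) ℤ}
    {f : MvPolynomial (Fin q) ℂ} (hf : IsSolution M f) {u v : Fin q →₀ ℕ}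
    (huv : Relation.ReflTransGen (Medge M) u v) : factorialCoeff f u = factorialCoeff f v := by
  induction huv with
  | refl => rfl
  | tail _ hvw ih => exact ih.trans ((isSolution_iff_forall_medge M f).1 hf _ _ hvw)

end Solutions

lemma reflTransGen_add_nsmul {α : Type*} [AddCommMonoid α] {r : α → α → Prop} {p p' : α}
    (h : ∀ w, r (w + p) (w + p')) (w : α) (n : ℕ) :
    Relation.ReflTransGen r (w + n • p) (w + n • p') := by
  induction n generalizing w with
  | zero => simp only [zero_smul, Relation.ReflTransGen.refl]
  | succ n ih =>
    have hstep := h (w + n • p)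
    rw [add_right_comm w (n • p) p'] at hstep
    rw [succ_nsmul, succ_nsmul, ← add_assoc, ← add_assoc, add_right_comm w _ p']
    exact .head hstep (ih (w + p'))

lemma Finsupp.degree_fin_three (u : Fin 3 →₀ ℕ) : u.degree = u 0 + u 1 + u 2 := by
  rw [Finsupp.degree_eq_sum, Fin.sum_univ_three]

section ExampleMatrix

open Finsupp Relation

def exampleMatrix : Matrix (Fin 3) (Fin 3) ℤ := !![1, -5, 0; -1, 1, -1; 0, 3, 1]

local notation "Γ" => Medge exampleMatrix

lemma medge_add_single_zero (w : Fin 3 →₀ ℕ) : Γ (w + single 0 1) (w + single 1 1) :=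
  ⟨0, Or.inl fun i => by fin_cases i <;> simp [exampleMatrix]⟩

lemma medge_add_single_two (w : Fin 3 →₀ ℕ) : Γ (w + single 2 1) (w + single 1 1) :=
  ⟨2, Or.inl fun i => by fin_cases i <;> simp [exampleMatrix]⟩

lemma medge_add_jump (w : Fin 3 →₀ ℕ) :
    Γ (w + (single 1 1 + single 2 3)) (w + single 0 5) :=
  ⟨1, Or.inl fun i => by fin_cases i <;> simp [exampleMatrix]⟩

lemma min_degree_eq_of_medge {u v : Fin 3 →₀ ℕ} (h : Γ u v) :
    min u.degree 4 = min v.degree 4 := by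
  obtain ⟨j, h | h⟩ := h <;>
  · have h0 := h 0; have h1 := h 1; have h2 := h 2
    rw [degree_fin_three, degree_fin_three]
    fin_cases j <;> simp [exampleMatrix] at h0 h1 h2 <;> omega

lemma reflTransGen_single_one_degree (u : Fin 3 →₀ ℕ) : ReflTransGen Γ u (single 1 u.degree) := by
  have h01 := reflTransGen_add_nsmul medge_add_single_zero (single 1 (u 1) + single 2 (u 2)) (u 0)
  have h21 := reflTransGen_add_nsmul medge_add_single_two (single 1 (u 0 + u 1)) (u 2)
  have e1 : single 1 (u 1) + single 2 (u 2) + single 0 (u 0) = u := by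
    ext i; fin_cases i <;> simp
  have e2 : (single 1 (u 1) + single 2 (u 2) + single 1 (u 0) : Fin 3 →₀ ℕ) =
      single 1 (u 0 + u 1) + single 2 (u 2) := by
    ext i; fin_cases i <;> simp [add_comm]
  have e3 : (single 1 (u 0 + u 1) + single 1 (u 2) : Fin 3 →₀ ℕ) = single 1 u.degree := by
    rw [← single_add, degree_fin_three]
  simp only [smul_single, smul_eq_mul, mul_one, e1, e2, e3] at h01 h21
  exact h01.trans h21

lemma reflTransGen_of_degree_eq {u v : Fin 3 →₀ ℕ} (h : u.degree = v.degree) : ReflTransGen Γ u v :=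
  (reflTransGen_single_one_degree u).trans (h ▸ symm (reflTransGen_single_one_degree v))

/-- The only way up: `(0, n+4, 0) ~ (n, 1, 3)` inside a slice, then `(n, 1, 3) ~ (n+5, 0, 0)`. -/
lemma reflTransGen_single_one_succ {n : ℕ} (hn : 4 ≤ n) :
    ReflTransGen Γ (single 1 n) (single 1 (n + 1)) := by
  obtain ⟨k, rfl⟩ : ∃ k, n = k + 4 := ⟨n - 4, by omega⟩
  refine (reflTransGen_of_degree_eq ?_).trans
    (.head (medge_add_jump (single 0 k)) (reflTransGen_of_degree_eq ?_)) <;>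
    simp only [map_add, degree_single]

lemma reflTransGen_single_one_of_four_le {n : ℕ} (hn : 4 ≤ n) :
    ReflTransGen Γ (single 1 4) (single 1 n) := by
  induction n, hn using Nat.le_induction with
  | base => exact .refl
  | succ n hn ih => exact ih.trans (reflTransGen_single_one_succ hn)

lemma reflTransGen_medge_iff {u v : Fin 3 →₀ ℕ} :
    ReflTransGen Γ u v ↔ min u.degree 4 = min v.degree 4 := by
  constructor
  · intro h
    induction h with
    | refl => rfl
    | tail _ hvw ih => exact ih.trans (min_degree_eq_of_medge hvw)
  · intro h
    by_cases hu : u.degree < 4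
    · exact reflTransGen_of_degree_eq (by omega)
    · have hfour (w : Fin 3 →₀ ℕ) (hw : 4 ≤ w.degree) : ReflTransGen Γ (single 1 4) w :=
        (reflTransGen_single_one_of_four_le hw).trans (symm (reflTransGen_single_one_degree w))
      exact (symm (hfour u (by omega))).trans (hfour v (by omega))

lemma Mcomp_exampleMatrix (u : Fin 3 →₀ ℕ) :
    Mcomp exampleMatrix u = {v | min v.degree 4 = min u.degree 4} := by
  ext v
  exact reflTransGen_medge_iff.trans eq_comm

theorem isSolution_exampleMatrix_iff (f : MvPolynomial (Fin 3) ℂ) :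
    IsSolution exampleMatrix f ↔ ∃ c : Fin 4 → ℂ, f = ∑ i : Fin 4, c i • (∑ j, X j) ^ (i : ℕ) := by
  constructor
  · intro hf
    have hslice (u : Fin 3 →₀ ℕ) : factorialCoeff f u = factorialCoeff f (single 1 u.degree) :=
      hf.factorialCoeff_eq_of_reflTransGen (reflTransGen_single_one_degree u)
    have hvanish (u : Fin 3 →₀ ℕ) (hu : 4 ≤ u.degree) : factorialCoeff f u = 0 := by
      rw [hf.factorialCoeff_eq_of_reflTransGen (v := single 1 (f.totalDegree + 4))
        (reflTransGen_medge_iff.2 (by simp only [degree_single]; omega))]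
      exact factorialCoeff_eq_zero_of_totalDegree_lt (by simp only [degree_single]; omega)
    refine ⟨fun i => factorialCoeff f (single 1 i) / (i : ℕ).factorial, factorialCoeff_injective ?_⟩
    funext u
    rw [factorialCoeff_sum_smul_sum_X_pow]
    split_ifs with hu
    · rw [hslice, div_mul_cancel₀ _ (Nat.cast_ne_zero.2 (Nat.factorial_ne_zero _))]
    · exact hvanish u (by omega)
  · rintro ⟨c, rfl⟩
    refine (isSolution_iff_forall_medge _ _).2 fun u v huv => ?_
    have hdeg := min_degree_eq_of_medge huv
    simp only [factorialCoeff_sum_smul_sum_X_pow]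
    by_cases hu : u.degree < 4
    · rw [show u.degree = v.degree by omega]
    · rw [dif_neg hu, dif_neg (by omega)]

end ExampleMatrix

/-- For `M` with columns `(1,-1,0)`, `(-5,1,3)`, `(0,-1,1)`, the `M`-subgraphs
of `ℕ³` are exactly the slices `{a+b+c = n}` for `n = 0,1,2,3` together with
the single unbounded set `{a+b+c ≥ 4}`; consequently the polynomial solutions
of `I(M)` are spanned by `1, x+y+z, (x+y+z)², (x+y+z)³`, which are linearly
independent, so the solution space is 4-dimensional. -/
theorem example_M_subgraphs_and_solutions
    (M : Matrix (Fin 3) (Fin 3) ℤ) (hM : M = !![1, -5, 0; -1, 1, -1; 0, 3, 1])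
    (s : MvPolynomial (Fin 3) ℂ) (hs : s = X 0 + X 1 + X 2) :
    (∀ u : Fin 3 →₀ ℕ, u 0 + u 1 + u 2 ≤ 3 →
      Mcomp M u = {v | v 0 + v 1 + v 2 = u 0 + u 1 + u 2}) ∧
    (∀ u : Fin 3 →₀ ℕ, 4 ≤ u 0 + u 1 + u 2 →
      Mcomp M u = {v | 4 ≤ v 0 + v 1 + v 2}) ∧
    (∀ f : MvPolynomial (Fin 3) ℂ, IsSolution M f ↔
      ∃ c : Fin 4 → ℂ, f = ∑ i : Fin 4, c i • s ^ (i : ℕ)) ∧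
    LinearIndependent ℂ (fun i : Fin 4 => s ^ (i : ℕ)) := by
  obtain rfl : M = exampleMatrix := hM
  obtain rfl : s = ∑ i, X i := hs.trans (Fin.sum_univ_three _).symm
  refine ⟨fun u hu => ?_, fun u hu => ?_, isSolution_exampleMatrix_iff,
    linearIndependent_sum_X_pow 4⟩
  all_goals
    ext v
    simp only [Mcomp_exampleMatrix, Set.mem_ofPred_eq, Finsupp.degree_fin_three]
    omega
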